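/- arXiv:2109.01552 — 14 statements merged into one kernel-verified Lean document; each statement's English description precedes it below -/
import Mathlib

section
/- For every epistemic interpretation E on W and every fixed proposition C ⊆ W, the binary relation A |~ B defined by 'E satisfies the situated conditional A |~_C B' satisfies the situated rationality postulates: (Ref) A |~ A; (And) if A |~ B and A |~ D then A |~ B ∩ D; (Or) if A |~ D and B |~ D then A ∪ B |~ D; (RW) if A |~ B and B ⊆ D then A |~ D; (CM) if A |~ B and A |~ D then A ∩ D |~ B; (RM) if A |~ B and not A |~ (W \ D) then A ∩ D |~ B. -/
open scoped Classical

/-- The set of ranks `Rk`: finite ranks `(f, i)` with `i ∈ ℕ`, and infinite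
ranks `(∞, i)` with `i ∈ ℕ ∪ {∞}`. -/
inductive Rk where
  | fin : ℕ → Rk
  | inf : ℕ∞ → Rk

/-- The total order on ranks: `(f,i) ≤ (f,j)` iff `i ≤ j`; `(∞,i) ≤ (∞,j)` iff
`i ≤ j`; every finite rank is below every infinite rank. -/
def Rk.le : Rk → Rk → Prop
  | .fin i, .fin j => i ≤ j
  | .fin _, .inf _ => True
  | .inf _, .fin _ => False
  | .inf i, .inf j => i ≤ j

variable {W : Type*} [Fintype W] [Nonempty W]

/-- A ranked interpretation: a function `R : W → ℕ∞` satisfying convexity. -/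
def RankedInterp (R : W → ℕ∞) : Prop :=
  ∀ u : W, ∀ i : ℕ, R u = (i : ℕ∞) → ∀ j : ℕ, j < i → ∃ u' : W, R u' = (j : ℕ∞)

/-- The finitely ranked (plausible) worlds of a ranked interpretation. -/
def UfR (R : W → ℕ∞) : Set W := {u | R u ≠ ⊤}

/-- `R` satisfies the defeasible conditional `A |~ B`: every world of `A` of
finite rank whose rank is minimal among finitely ranked worlds of `A` is in `B`. -/
def SatDC (R : W → ℕ∞) (A B : Set W) : Prop :=
  ∀ u ∈ A ∩ UfR R, (∀ v ∈ A ∩ UfR R, R u ≤ R v) → u ∈ B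

/-- An epistemic interpretation: a function `E : W → Rk` satisfying the two-tier
convexity property. -/
def EpiInterp (E : W → Rk) : Prop :=
  (∀ u : W, ∀ i : ℕ, E u = Rk.fin i → ∀ j : ℕ, j < i → ∃ u' : W, E u' = Rk.fin j) ∧
  (∀ u : W, ∀ i : ℕ, E u = Rk.inf (i : ℕ∞) → ∀ j : ℕ, j < i → ∃ u' : W, E u' = Rk.inf (j : ℕ∞))

/-- Plausible worlds of an epistemic interpretation: those with finite rank `(f,i)`. -/
def UfE (E : W → Rk) : Set W := {u | ∃ i : ℕ, E u = Rk.fin i}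

/-- Implausible-but-possible worlds: those with rank `(∞,i)`, `i ∈ ℕ`. -/
def UiE (E : W → Rk) : Set W := {u | ∃ i : ℕ, E u = Rk.inf (i : ℕ∞)}

/-- `E` satisfies the situated conditional `A |~_C B`. -/
def SatSC (E : W → Rk) (A B C : Set W) : Prop :=
  if (C ∩ UfE E).Nonempty then
    ∀ u ∈ A ∩ C ∩ UfE E, (∀ v ∈ A ∩ C ∩ UfE E, (E u).le (E v)) → u ∈ B
  else
    ∀ u ∈ A ∩ C ∩ UiE E, (∀ v ∈ A ∩ C ∩ UiE E, (E u).le (E v)) → u ∈ B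

/-!
Both tiers of an epistemic interpretation are evaluated in the same way: a situated conditional
`A |~_C B` says that the minimal worlds of `A ∩ S` lie in `B`, for one fixed set `S` of worlds
(the plausible `C`-worlds if there are any, otherwise the implausible `C`-worlds), ranked by the
total order on `Rk`. Ref, And, Or and RW hold for any such ranking. For RM and CM, a minimal world
of `A ∩ D ∩ S` is already minimal in `A ∩ S` as soon as some minimal world of `A ∩ S` lies in `D`;
for RM the failure of `A |~ Dᶜ` provides that world, for CM finiteness of `W` does.
-/

noncomputable instance : LinearOrder Rk where
  le := Rk.le
  le_refl
    | .fin i => le_refl i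
    | .inf i => le_refl i
  le_trans
    | .fin _, .fin _, .fin _, hab, hbc => Nat.le_trans hab hbc
    | .fin _, _, .inf _, _, _ => trivial
    | .inf _, .inf _, .inf _, hab, hbc => le_trans (α := ℕ∞) hab hbc
    | _, .inf _, .fin _, _, hbc => hbc.elim
    | .inf _, .fin _, _, hab, _ => hab.elim
  le_antisymm
    | .fin _, .fin _, hab, hba => congrArg Rk.fin (Nat.le_antisymm hab hba)
    | .inf _, .inf _, hab, hba => congrArg Rk.inf (le_antisymm (α := ℕ∞) hab hba)
    | .inf _, .fin _, hab, _ => hab.elim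
    | .fin _, .inf _, _, hba => hba.elim
  le_total
    | .fin i, .fin j => Nat.le_total i j
    | .inf i, .inf j => le_total i j
    | .fin _, .inf _ => .inl trivial
    | .inf _, .fin _ => .inr trivial
  toDecidableLE := Classical.decRel _

theorem IsMinOn.of_isMinOn_of_mem {α β : Type*} [Preorder β] {f : α → β} {s t : Set α} {a b : α}
    (ha : IsMinOn f s a) (hb : IsMinOn f t b) (hbs : b ∈ s) : IsMinOn f t a :=
  fun _ hx => le_trans (ha hbs) (hb hx)

section Preferential

variable {α β : Type*}

def PrefEntails [Preorder β] (r : α → β) (S A B : Set α) : Prop :=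
  ∀ u ∈ A ∩ S, IsMinOn r (A ∩ S) u → u ∈ B

namespace PrefEntails

section Preorder

variable [Preorder β] {r : α → β} {S A B D : Set α}

theorem refl : PrefEntails r S A A :=
  fun _ hu _ => hu.1

theorem inter (hB : PrefEntails r S A B) (hD : PrefEntails r S A D) :
    PrefEntails r S A (B ∩ D) :=
  fun u hu hmin => ⟨hB u hu hmin, hD u hu hmin⟩

theorem mono (h : PrefEntails r S A B) (hBD : B ⊆ D) : PrefEntails r S A D :=
  fun u hu hmin => hBD (h u hu hmin)

theorem union (hA : PrefEntails r S A D) (hB : PrefEntails r S B D) :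
    PrefEntails r S (A ∪ B) D := by
  rintro u ⟨hu | hu, huS⟩ hmin
  · exact hA u ⟨hu, huS⟩ (hmin.on_subset (Set.inter_subset_inter_left S Set.subset_union_left))
  · exact hB u ⟨hu, huS⟩ (hmin.on_subset (Set.inter_subset_inter_left S Set.subset_union_right))

theorem inter_left_of_exists_mem (h : PrefEntails r S A B)
    (hD : ∃ m ∈ A ∩ S, IsMinOn r (A ∩ S) m ∧ m ∈ D) : PrefEntails r S (A ∩ D) B := by
  obtain ⟨m, ⟨hmA, hmS⟩, hm, hmD⟩ := hD
  rintro u ⟨⟨huA, -⟩, huS⟩ hu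
  exact h u ⟨huA, huS⟩ (hu.of_isMinOn_of_mem hm ⟨⟨hmA, hmD⟩, hmS⟩)

theorem rational_mono (h : PrefEntails r S A B) (hD : ¬ PrefEntails r S A Dᶜ) :
    PrefEntails r S (A ∩ D) B := by
  refine h.inter_left_of_exists_mem ?_
  simpa only [PrefEntails, Set.mem_compl_iff, not_forall, not_not, exists_prop] using hD

end Preorder

variable [LinearOrder β] {r : α → β} {S A B D : Set α}

theorem cautious_mono (hS : S.Finite)
    (hB : PrefEntails r S A B) (hD : PrefEntails r S A D) : PrefEntails r S (A ∩ D) B := by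
  rintro u ⟨⟨huA, huD⟩, huS⟩
  obtain ⟨m, hm, hmin⟩ := Set.exists_min_image (A ∩ S) r (hS.inter_of_right A) ⟨u, huA, huS⟩
  exact hB.inter_left_of_exists_mem ⟨m, hm, hmin, hD m hm hmin⟩ u ⟨⟨huA, huD⟩, huS⟩

end PrefEntails

end Preferential

def situatedWorlds {α : Type*} (E : α → Rk) (C : Set α) : Set α :=
  if (C ∩ UfE E).Nonempty then C ∩ UfE E else C ∩ UiE E

theorem satSC_iff_prefEntails {α : Type*} (E : α → Rk) (A B C : Set α) :
    SatSC E A B C ↔ PrefEntails E (situatedWorlds E C) A B := by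
  unfold SatSC situatedWorlds PrefEntails
  split_ifs <;> simp only [Set.inter_assoc, isMinOn_iff] <;> rfl

theorem situated_rationality_postulates_general (E : W → Rk) (C : Set W) :
    (∀ A : Set W, SatSC E A A C) ∧
    (∀ A B D : Set W, SatSC E A B C → SatSC E A D C → SatSC E A (B ∩ D) C) ∧
    (∀ A B D : Set W, SatSC E A D C → SatSC E B D C → SatSC E (A ∪ B) D C) ∧
    (∀ A B D : Set W, SatSC E A B C → B ⊆ D → SatSC E A D C) ∧
    (∀ A B D : Set W, SatSC E A B C → SatSC E A D C → SatSC E (A ∩ D) B C) ∧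
    (∀ A B D : Set W, SatSC E A B C → ¬ SatSC E A Dᶜ C → SatSC E (A ∩ D) B C) := by
  simp only [satSC_iff_prefEntails]
  have hfin : (situatedWorlds E C).Finite := Set.toFinite _
  exact ⟨fun _ => .refl, fun _ _ _ => .inter, fun _ _ _ => .union, fun _ _ _ => .mono,
    fun _ _ _ => .cautious_mono hfin, fun _ _ _ => .rational_mono⟩

/-- for an epistemic interpretation `E` and a fixed situation `C`,
the binary relation `A |~ B := SatSC E A B C` satisfies the situated
rationality postulates Ref, And, Or, RW, CM and RM. -/
theorem situated_rationality_postulates (E : W → Rk) (hE : EpiInterp E)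
    (C : Set W) :
    (∀ A : Set W, SatSC E A A C) ∧
    (∀ A B D : Set W, SatSC E A B C → SatSC E A D C → SatSC E A (B ∩ D) C) ∧
    (∀ A B D : Set W, SatSC E A D C → SatSC E B D C → SatSC E (A ∪ B) D C) ∧
    (∀ A B D : Set W, SatSC E A B C → B ⊆ D → SatSC E A D C) ∧
    (∀ A B D : Set W, SatSC E A B C → SatSC E A D C → SatSC E (A ∩ D) B C) ∧
    (∀ A B D : Set W, SatSC E A B C → ¬ SatSC E A Dᶜ C → SatSC E (A ∩ D) B C) :=
  situated_rationality_postulates_general E C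
end

section
/- There exists a ternary relation |~ on propositional formulas over the atoms {p, q} that satisfies all the situated rationality postulates (Ref, LLE, And, Or, RW, RM) but is not generated by any epistemic interpretation on the set of valuations of {p, q}. -/
open scoped Classical

variable {W : Type*} [Fintype W] [Nonempty W]

/-- Propositional formulas over the two atoms `p` and `q`. -/
inductive Fm where
  | p : Fm
  | q : Fm
  | bot : Fm
  | neg : Fm → Fm
  | and : Fm → Fm → Fm
  | or : Fm → Fm → Fm

/-- Boolean satisfaction of a formula in a valuation of `{p, q}`,
represented as a pair of Booleans (value of `p`, value of `q`). -/
def Fm.sat : Bool × Bool → Fm → Bool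
  | v, .p => v.1
  | v, .q => v.2
  | _, .bot => false
  | v, .neg a => !(Fm.sat v a)
  | v, .and a b => Fm.sat v a && Fm.sat v b
  | v, .or a b => Fm.sat v a || Fm.sat v b

/-- The models of a formula. -/
def FmMod (a : Fm) : Set (Bool × Bool) := {v | Fm.sat v a = true}

/-- A ternary relation `rel α β γ` (read `α |~_γ β`) satisfies the situated
rationality postulates Ref, LLE, And, Or, RW and RM. -/
def SitPostulates (rel : Fm → Fm → Fm → Prop) : Prop :=
  (∀ α γ : Fm, rel α α γ) ∧
  (∀ α β γ δ : Fm, FmMod α = FmMod β → rel α δ γ → rel β δ γ) ∧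
  (∀ α β γ δ : Fm, rel α β γ → rel α δ γ → rel α (Fm.and β δ) γ) ∧
  (∀ α β γ δ : Fm, rel α δ γ → rel β δ γ → rel (Fm.or α β) δ γ) ∧
  (∀ α β γ δ : Fm, rel α β γ → FmMod β ⊆ FmMod δ → rel α δ γ) ∧
  (∀ α β γ δ : Fm, rel α β γ → ¬ rel α (Fm.neg δ) γ → rel (Fm.and α δ) β γ)

/-- there is a ternary relation on formulas over `{p,q}` that
satisfies all the situated rationality postulates but is not generated by any
epistemic interpretation on the valuations of `{p,q}`. -/
theorem bsc_not_generated_by_epistemic_interpretation :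
    ∃ rel : Fm → Fm → Fm → Prop, SitPostulates rel ∧
      ¬ ∃ E : Bool × Bool → Rk, EpiInterp E ∧
        ∀ α β γ : Fm, rel α β γ ↔ SatSC E (FmMod α) (FmMod β) (FmMod γ) := by
  refine ⟨fun α β _ => FmMod α ⊆ FmMod β, ⟨fun α γ => le_refl _,
    fun α β γ δ h h2 => by simpa [← h] using h2,
    fun α β γ δ h1 h2 v hv => by
      simp only [FmMod, Fm.sat, Set.mem_setOf_eq, Bool.and_eq_true]
      exact ⟨h1 hv, h2 hv⟩,
    fun α β γ δ h1 h2 v hv => by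
      simp only [FmMod, Fm.sat, Set.mem_setOf_eq, Bool.or_eq_true] at hv
      rcases hv with h | h
      · exact h1 h
      · exact h2 h,
    fun α β γ δ h1 h2 => h1.trans h2,
    fun α β γ δ h1 _ v hv => by
      simp only [FmMod, Fm.sat, Set.mem_setOf_eq, Bool.and_eq_true] at hv
      exact h1 hv.1⟩, ?_⟩
  rintro ⟨E, -, hgen⟩
  have hbot : FmMod Fm.bot = ∅ := by
    ext v; simp [FmMod, Fm.sat]
  have hsat : SatSC E (FmMod Fm.p) (FmMod Fm.bot) (FmMod Fm.bot) := by
    unfold SatSC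
    rw [if_neg]
    · intro u hu
      rw [hbot] at hu
      simp at hu
    · rw [hbot]
      simp
  have := (hgen Fm.p Fm.bot Fm.bot).mpr hsat
  have : ((true, true) : Bool × Bool) ∈ FmMod Fm.bot :=
    this (by simp [FmMod, Fm.sat])
  rw [hbot] at this
  exact this
end

section
/- Every epistemic interpretation E on W satisfies the postulates Inc and Vac: (Inc) for all propositions A, B, C, if E satisfies A |~_C B then E satisfies (A ∩ C) |~_⊤ B; and (Vac) for all propositions A, B, C, if E does not satisfy ⊤ |~_⊤ (W \ C) and E satisfies (A ∩ C) |~_⊤ B, then E satisfies A |~_C B. -/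
open scoped Classical

variable {W : Type*} [Fintype W] [Nonempty W]

/-- every epistemic interpretation satisfies Inc and Vac. -/
theorem inc_and_vac (E : W → Rk) (hE : EpiInterp E) :
    (∀ A B C : Set W, SatSC E A B C → SatSC E (A ∩ C) B Set.univ) ∧
    (∀ A B C : Set W, ¬ SatSC E Set.univ Cᶜ Set.univ →
      SatSC E (A ∩ C) B Set.univ → SatSC E A B C) := by
  constructor
  · intro A B C h
    unfold SatSC at *
    by_cases hf : (Set.univ ∩ UfE E : Set W).Nonempty
    · rw [if_pos hf]
      by_cases hc : (C ∩ UfE E).Nonempty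
      · rw [if_pos hc] at h
        intro u hu hmin
        exact h u (by simpa using hu) fun v hv => hmin v (by simpa using hv)
      · intro u hu _
        exact absurd ⟨u, hu.1.1.2, hu.2⟩ hc
    · rw [if_neg hf]
      have hc : ¬(C ∩ UfE E).Nonempty := fun ⟨u, hu⟩ => hf ⟨u, trivial, hu.2⟩
      rw [if_neg hc] at h
      intro u hu hmin
      exact h u (by simpa using hu) fun v hv => hmin v (by simpa using hv)
  · intro A B C hneg h
    unfold SatSC at *
    by_cases hf : (Set.univ ∩ UfE E : Set W).Nonempty
    · rw [if_pos hf] at hneg h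
      push_neg at hneg
      obtain ⟨u, hu, hmin, huC⟩ := hneg
      have hc : (C ∩ UfE E).Nonempty := ⟨u, by simpa using huC, hu.2⟩
      rw [if_pos hc]
      intro v hv hvmin
      exact h v (by simpa using hv) fun w hw => hvmin w (by simpa using hw)
    · have hc : ¬(C ∩ UfE E).Nonempty := fun ⟨u, hu⟩ => hf ⟨u, trivial, hu.2⟩
      rw [if_neg hf] at h
      rw [if_neg hc]
      intro v hv hvmin
      exact h v (by simpa using hv) fun w hw => hvmin w (by simpa using hw)
end

section
/- Every epistemic interpretation E on W satisfies the postulates SupExp and SubExp: (SupExp) for all propositions A, B, C, D, if E satisfies A |~_{C ∩ D} B then E satisfies (A ∩ C) |~_D B; and (SubExp) for all propositions A, B, C, D, if E satisfies D |~_⊤ ⊥ and E satisfies (A ∩ C) |~_D B, then E satisfies A |~_{C ∩ D} B. -/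
open scoped Classical

variable {W : Type*} [Fintype W] [Nonempty W]

lemma min_fin (E : W → Rk) {S : Set W} (hS : S.Nonempty) (hSf : S ⊆ UfE E) :
    ∃ u ∈ S, ∀ v ∈ S, (E u).le (E v) := by
  classical
  obtain ⟨u0, hu0⟩ := hS
  obtain ⟨i0, hi0⟩ := hSf hu0
  have hex : ∃ i : ℕ, ∃ u ∈ S, E u = Rk.fin i := ⟨i0, u0, hu0, hi0⟩
  obtain ⟨u, hu, heq⟩ := Nat.find_spec hex
  refine ⟨u, hu, fun v hv => ?_⟩
  obtain ⟨j, hj⟩ := hSf hv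
  have hle := Nat.find_min' hex (m := j) ⟨v, hv, hj⟩
  rw [heq, hj]
  exact hle

lemma min_inf (E : W → Rk) {S : Set W} (hS : S.Nonempty) (hSf : S ⊆ UiE E) :
    ∃ u ∈ S, ∀ v ∈ S, (E u).le (E v) := by
  classical
  obtain ⟨u0, hu0⟩ := hS
  obtain ⟨i0, hi0⟩ := hSf hu0
  have hex : ∃ i : ℕ, ∃ u ∈ S, E u = Rk.inf (i : ℕ∞) := ⟨i0, u0, hu0, hi0⟩
  obtain ⟨u, hu, heq⟩ := Nat.find_spec hex
  refine ⟨u, hu, fun v hv => ?_⟩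
  obtain ⟨j, hj⟩ := hSf hv
  have hle := Nat.find_min' hex (m := j) ⟨v, hv, hj⟩
  rw [heq, hj]
  exact Nat.cast_le.mpr hle

/-- every epistemic interpretation satisfies SupExp and SubExp. -/
theorem supexp_and_subexp (E : W → Rk) (hE : EpiInterp E) :
    (∀ A B C D : Set W, SatSC E A B (C ∩ D) → SatSC E (A ∩ C) B D) ∧
    (∀ A B C D : Set W, SatSC E D ∅ Set.univ →
      SatSC E (A ∩ C) B D → SatSC E A B (C ∩ D)) := by
  constructor
  · intro A B C D h
    unfold SatSC at h ⊢
    by_cases h1 : ((C ∩ D) ∩ UfE E).Nonempty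
    · rw [if_pos h1] at h
      have h2 : (D ∩ UfE E).Nonempty :=
        h1.mono (Set.inter_subset_inter_left _ Set.inter_subset_right)
      rw [if_pos h2]
      rw [← Set.inter_assoc] at h
      exact h
    · rw [if_neg h1] at h
      by_cases h2 : (D ∩ UfE E).Nonempty
      · rw [if_pos h2]
        intro u hu _
        exact absurd ⟨u, ⟨hu.1.1.2, hu.1.2⟩, hu.2⟩ h1
      · rw [if_neg h2]
        rw [← Set.inter_assoc] at h
        exact h
  · intro A B C D hD h
    unfold SatSC at hD h ⊢
    by_cases hf : (Set.univ ∩ UfE E).Nonempty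
    · rw [if_pos hf] at hD
      have hDf : ¬ (D ∩ UfE E).Nonempty := by
        intro hne
        have hne' : (D ∩ Set.univ ∩ UfE E).Nonempty := by
          simpa [Set.inter_univ] using hne
        obtain ⟨u, hu, hmin⟩ := min_fin E hne' Set.inter_subset_right
        exact (hD u hu hmin)
      have hCDf : ¬ ((C ∩ D) ∩ UfE E).Nonempty := by
        intro hne
        exact hDf (hne.mono (Set.inter_subset_inter_left _ Set.inter_subset_right))
      rw [if_neg hDf] at h
      rw [if_neg hCDf]
      rw [← Set.inter_assoc]
      exact h
    · rw [if_neg hf] at hD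
      have hDi : ¬ (D ∩ UiE E).Nonempty := by
        intro hne
        have hne' : (D ∩ Set.univ ∩ UiE E).Nonempty := by
          simpa [Set.inter_univ] using hne
        obtain ⟨u, hu, hmin⟩ := min_inf E hne' Set.inter_subset_right
        exact (hD u hu hmin)
      have hCDf : ¬ ((C ∩ D) ∩ UfE E).Nonempty := by
        intro hne
        exact hf (hne.mono (Set.inter_subset_inter_left _ (Set.subset_univ _)))
      rw [if_neg hCDf]
      intro u hu _
      exact absurd ⟨u, hu.1.2.2, hu.2⟩ hDi
end

section
/- (Failure of Cons) There exist an epistemic interpretation E on W and a nonempty proposition C ⊆ W such that E satisfies ⊤ |~_C ⊥ (i.e., W |~_C ∅); in particular, the postulate 'E satisfies ⊤ |~_C ⊥ only if C = ∅' fails for epistemic interpretations. -/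
open scoped Classical

variable {W : Type*} [Fintype W] [Nonempty W]

/-- failure of Cons: there are an epistemic interpretation `E`
and a nonempty situation `C` such that `E` satisfies `⊤ |~_C ⊥`. -/
theorem cons_fails :
    ∃ (E : W → Rk) (C : Set W), EpiInterp E ∧ C.Nonempty ∧
      SatSC E Set.univ ∅ C := by
  refine ⟨fun _ => Rk.inf ⊤, Set.univ, ⟨?_, ?_⟩, Set.univ_nonempty, ?_⟩
  · intro u i h; simp at h
  · intro u i h
    injection h with h
    simp at h
  · have hU : UfE (fun _ : W => Rk.inf ⊤) = ∅ := by
      ext u; simp [UfE]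
    have hI : UiE (fun _ : W => Rk.inf ⊤) = ∅ := by
      ext u; simp only [UiE, Set.mem_setOf_eq, Set.mem_empty_iff_false, iff_false]
      rintro ⟨i, h⟩; injection h with h; simp at h
    simp [SatSC, hU, hI]
end

section
/- (Cond) For every epistemic interpretation E on W and all propositions A, B, C ⊆ W: if C ∩ U^f_E ≠ ∅ (equivalently, E does not satisfy C |~_⊤ ⊥), then E satisfies A |~_C B if and only if E satisfies (A ∩ C) |~_⊤ B. -/
open scoped Classical

variable {W : Type*} [Fintype W] [Nonempty W]

/-- Cond: if the situation `C` is compatible with the plausible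
part of `E`, then `A |~_C B` holds in `E` iff `(A ∩ C) |~_⊤ B` holds in `E`. -/
theorem cond_holds (E : W → Rk) (hE : EpiInterp E) (A B C : Set W)
    (h : (C ∩ UfE E).Nonempty) :
    SatSC E A B C ↔ SatSC E (A ∩ C) B Set.univ := by
  have h' : (Set.univ ∩ UfE E).Nonempty := by
    obtain ⟨u, _, hu⟩ := h
    exact ⟨u, Set.mem_univ u, hu⟩
  unfold SatSC
  rw [if_pos h, if_pos h']
  constructor <;> intro H u hu hmin <;>
    [ (exact H u (by simpa using hu) (fun v hv => hmin v (by simpa using hv)));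
      (exact H u (by simpa using hu) (fun v hv => hmin v (by simpa using hv)))]
end

section
/- Let KB be an SCKB and let R be the minimum ranked model of its conjunctive classical form KB^∧. Then the epistemic interpretation E^R extracted from R (defined by E^R(u) = (f, R(u)) if R(u) ∈ ℕ and E^R(u) = (∞,∞) if R(u) = ∞) is an epistemic model of KB, i.e., E^R satisfies every situated conditional (A, B, C) ∈ KB. -/
open scoped Classical

variable {W : Type*} [Fintype W] [Nonempty W]

/-- The conjunctive classical form of an SCKB: `KB^∧ = {(A ∩ C, B) : (A,B,C) ∈ KB}`. -/
def conjForm (KB : Set (Set W × Set W × Set W)) : Set (Set W × Set W) :=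
  {p | ∃ A B C : Set W, (A, B, C) ∈ KB ∧ p = (A ∩ C, B)}

/-- `R` is a ranked model of a set of pairs of propositions (defeasible conditionals). -/
def RankedModel (R : W → ℕ∞) (S : Set (Set W × Set W)) : Prop :=
  RankedInterp R ∧ ∀ p ∈ S, SatDC R p.1 p.2

/-- `R` is the minimum ranked model of `S`: a ranked model of `S` that is
pointwise below every other ranked model of `S`. -/
def MinRankedModel (R : W → ℕ∞) (S : Set (Set W × Set W)) : Prop :=
  RankedModel R S ∧ ∀ R' : W → ℕ∞, RankedModel R' S → ∀ u : W, R u ≤ R' u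

/-- `E` is an epistemic model of an SCKB: it is an epistemic interpretation
satisfying every situated conditional `(A, B, C)` in the knowledge base. -/
def EpiModel (E : W → Rk) (KB : Set (Set W × Set W × Set W)) : Prop :=
  EpiInterp E ∧ ∀ t ∈ KB, SatSC E t.1 t.2.1 t.2.2

/-- The epistemic interpretation extracted from a ranked interpretation:
`E^R(u) = (f, R(u))` if `R(u)` is finite, and `E^R(u) = (∞,∞)` otherwise. -/
noncomputable def extractE (R : W → ℕ∞) : W → Rk := fun u =>
  if R u = ⊤ then Rk.inf ⊤ else Rk.fin (R u).toNat

/-- the epistemic interpretation extracted from the minimum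
ranked model of `KB^∧` is an epistemic model of `KB`. -/
theorem classical_epistemic_model_is_model
    (KB : Set (Set W × Set W × Set W)) (hfin : KB.Finite)
    (R : W → ℕ∞) (hR : MinRankedModel R (conjForm KB)) :
    EpiInterp (extractE R) ∧ ∀ t ∈ KB, SatSC (extractE R) t.1 t.2.1 t.2.2 := by
  obtain ⟨⟨hRI, hSat⟩, -⟩ := hR
  have hUfE : UfE (extractE R) = UfR R := by
    ext u
    simp only [UfE, UfR, Set.mem_setOf_eq, extractE]
    constructor
    · rintro ⟨i, hi⟩ h
      simp [h] at hi
    · intro h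
      exact ⟨(R u).toNat, by simp [h]⟩
  have hUiE : UiE (extractE R) = ∅ := by
    ext u
    simp only [UiE, Set.mem_setOf_eq, extractE, Set.mem_empty_iff_false, iff_false]
    rintro ⟨i, hi⟩
    split at hi
    · rw [Rk.inf.injEq] at hi
      exact (ENat.coe_ne_top i) hi.symm
    · exact Rk.noConfusion hi
  have hval : ∀ u : W, R u ≠ ⊤ → extractE R u = Rk.fin (R u).toNat ∧
      R u = ((R u).toNat : ℕ∞) := fun u h => ⟨by simp [extractE, h], (ENat.coe_toNat h).symm⟩
  constructor
  · constructor
    · intro u i hu j hj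
      have hu' : R u ≠ ⊤ := by
        intro h; simp [extractE, h] at hu
      obtain ⟨h1, h2⟩ := hval u hu'
      rw [h1, Rk.fin.injEq] at hu
      obtain ⟨u', hu'2⟩ := hRI u (R u).toNat h2 j (hu ▸ hj)
      have : R u' ≠ ⊤ := by rw [hu'2]; exact ENat.coe_ne_top j
      exact ⟨u', by simp [extractE, this, hu'2]⟩
    · intro u i hu
      exfalso
      have : u ∈ UiE (extractE R) := ⟨i, hu⟩
      rw [hUiE] at this
      exact this
  · rintro ⟨A, B, C⟩ ht
    simp only [SatSC]
    split
    · intro u hu hmin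
      have hconj : (A ∩ C, B) ∈ conjForm KB := ⟨A, B, C, ht, rfl⟩
      have huA : u ∈ A := hu.1.1
      have huC : u ∈ C := hu.1.2
      have huf : u ∈ UfR R := hUfE ▸ hu.2
      refine hSat _ hconj u ⟨⟨huA, huC⟩, huf⟩ ?_
      rintro v ⟨hvAC, hvf⟩
      have hvle := hmin v ⟨⟨hvAC.1, hvAC.2⟩, hUfE ▸ hvf⟩
      obtain ⟨hu1, hu2⟩ := hval u huf
      obtain ⟨hv1, hv2⟩ := hval v hvf
      rw [hu1, hv1] at hvle
      have : (R u).toNat ≤ (R v).toNat := hvle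
      rw [hu2, hv2]
      exact_mod_cast this
    · intro u hu _
      exfalso
      have : u ∈ UiE (extractE R) := hu.2
      rw [hUiE] at this
      exact this
end

section
/- Let KB be an SCKB. KB has an epistemic model E with {u : E(u) = (f,0)} ≠ ∅ if and only if its conjunctive classical form KB^∧ has a ranked model R with {u : R(u) = 0} ≠ ∅. -/
open scoped Classical

variable {W : Type*} [Fintype W] [Nonempty W]

/-- `KB` has an epistemic model with a world of rank `(f,0)` iff
`KB^∧` has a ranked model with a world of rank `0`. -/
theorem consistency_transfer
    (KB : Set (Set W × Set W × Set W)) (hfin : KB.Finite) :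
    (∃ E : W → Rk, EpiModel E KB ∧ {u : W | E u = Rk.fin 0}.Nonempty) ↔
    (∃ R : W → ℕ∞, RankedModel R (conjForm KB) ∧
      {u : W | R u = (0 : ℕ∞)}.Nonempty) := by
  constructor
  · rintro ⟨E, ⟨⟨hc1, _hc2⟩, hsat⟩, w, hw⟩
    set R : W → ℕ∞ := fun u => match E u with | .fin i => (i : ℕ∞) | .inf _ => ⊤ with hR
    have hRfin : ∀ u (i : ℕ), E u = Rk.fin i → R u = (i : ℕ∞) := by
      intro u i h; simp [hR, h]
    have hfinR : ∀ u (i : ℕ), R u = (i : ℕ∞) → E u = Rk.fin i := by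
      intro u i h
      rcases hE : E u with j | x
      · have h2 : ((j : ℕ∞)) = (i : ℕ∞) := by rw [hR] at h; simpa [hE] using h
        rw [Nat.cast_inj] at h2; rw [h2]
      · rw [hR] at h; simp [hE] at h
    have hUf : UfR R = UfE E := by
      ext u
      simp only [UfR, UfE, Set.mem_setOf_eq]
      constructor
      · intro h
        rcases hE : E u with j | x
        · exact ⟨j, rfl⟩
        · exact absurd (by simp [hR, hE]) h
      · rintro ⟨i, hi⟩
        rw [hRfin u i hi]; exact ENat.coe_ne_top i
    refine ⟨R, ⟨?_, ?_⟩, ⟨w, hRfin w 0 hw⟩⟩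
    · intro u i hu j hj
      obtain ⟨u', hu'⟩ := hc1 u i (hfinR u i hu) j hj
      exact ⟨u', hRfin u' j hu'⟩
    · rintro ⟨P, Q⟩ ⟨A, B, C, hABC, hp⟩
      rw [Prod.mk.injEq] at hp
      obtain ⟨rfl, rfl⟩ := hp
      intro u hu hmin
      have hsc := hsat _ hABC
      unfold SatSC at hsc
      rw [hUf] at hu
      have hCne : (C ∩ UfE E).Nonempty := ⟨u, hu.1.2, hu.2⟩
      rw [if_pos hCne] at hsc
      refine hsc u hu ?_
      intro v hv
      obtain ⟨a, ha⟩ := hu.2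
      obtain ⟨b, hb⟩ := hv.2
      have hle : R u ≤ R v := hmin v (by rwa [hUf])
      rw [hRfin u a ha, hRfin v b hb, Nat.cast_le] at hle
      rw [ha, hb]; exact hle
  · rintro ⟨R, ⟨hri, hsat⟩, w, hw⟩
    set E : W → Rk := fun u => if h : R u = ⊤ then Rk.inf ⊤ else Rk.fin (R u).toNat with hE
    have hEfin : ∀ u (i : ℕ), E u = Rk.fin i ↔ R u = (i : ℕ∞) := by
      intro u i
      constructor
      · intro h
        by_cases ht : R u = ⊤
        · simp [hE, ht] at h
        · simp only [hE, dif_neg ht] at h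
          have := Rk.fin.inj h
          rw [← this, ENat.coe_toNat ht]
      · intro h
        have ht : R u ≠ ⊤ := h ▸ ENat.coe_ne_top i
        simp only [hE, dif_neg ht]
        congr 1
        rw [h]; simp
    have hUf : UfE E = UfR R := by
      ext u
      simp only [UfE, UfR, Set.mem_setOf_eq]
      constructor
      · rintro ⟨i, hi⟩
        rw [(hEfin u i).1 hi]; exact ENat.coe_ne_top i
      · intro h
        exact ⟨(R u).toNat, (hEfin u _).2 (ENat.coe_toNat h).symm⟩
    have hUi : UiE E = ∅ := by
      ext u
      simp only [UiE, Set.mem_setOf_eq, Set.mem_empty_iff_false, iff_false]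
      rintro ⟨i, hi⟩
      by_cases ht : R u = ⊤
      · simp only [hE, dif_pos ht] at hi
        exact ENat.coe_ne_top i (Rk.inf.inj hi).symm
      · simp only [hE, dite_eq_ite] at hi
        rw [if_neg ht] at hi
        exact Rk.noConfusion hi
    refine ⟨E, ⟨⟨?_, ?_⟩, ?_⟩, ⟨w, (hEfin w 0).2 hw⟩⟩
    · intro u i hu j hj
      obtain ⟨u', hu'⟩ := hri u i ((hEfin u i).1 hu) j hj
      exact ⟨u', (hEfin u' j).2 hu'⟩
    · intro u i hu j hj
      exfalso
      by_cases ht : R u = ⊤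
      · simp only [hE, dif_pos ht] at hu
        exact ENat.coe_ne_top i (Rk.inf.inj hu).symm
      · simp only [hE, dite_eq_ite] at hu
        rw [if_neg ht] at hu
        exact Rk.noConfusion hu
    · rintro ⟨A, B, C⟩ hABC
      have hdc := hsat (A ∩ C, B) ⟨A, B, C, hABC, rfl⟩
      unfold SatSC
      split
      · intro u hu hmin
        rw [hUf] at hu
        refine hdc u hu ?_
        intro v hv
        have h1 : E u = Rk.fin (R u).toNat := (hEfin u _).2 (ENat.coe_toNat hu.2).symm
        have h2 : E v = Rk.fin (R v).toNat := (hEfin v _).2 (ENat.coe_toNat hv.2).symm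
        have hle := hmin v (by rwa [hUf])
        rw [h1, h2] at hle
        calc R u = ((R u).toNat : ℕ∞) := (ENat.coe_toNat hu.2).symm
          _ ≤ ((R v).toNat : ℕ∞) := by exact_mod_cast hle
          _ = R v := ENat.coe_toNat hv.2
      · intro u hu _
        exfalso
        have := hu.2
        rw [hUi] at this
        exact this
end

section
/- An SCKB KB is consistent (i.e., has an epistemic model E with {u : E(u) = (f,0)} ≠ ∅) if and only if its materialisation is propositionally satisfiable, i.e., there exists a world u ∈ W such that for every (A, B, C) ∈ KB, if u ∈ A ∩ C then u ∈ B. -/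
open scoped Classical

variable {W : Type*} [Fintype W] [Nonempty W]

/-- an SCKB is consistent iff its materialisation is
propositionally satisfiable. -/
theorem consistency_iff_materialisation_satisfiable
    (KB : Set (Set W × Set W × Set W)) (hfin : KB.Finite) :
    (∃ E : W → Rk, EpiModel E KB ∧ {u : W | E u = Rk.fin 0}.Nonempty) ↔
    (∃ u : W, ∀ t ∈ KB, u ∈ t.1 ∩ t.2.2 → u ∈ t.2.1) := by

  constructor
  · rintro ⟨E, ⟨hEI, hsat⟩, u₀, hu₀⟩
    refine ⟨u₀, fun t ht hmem => ?_⟩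
    have hsc := hsat t ht
    have hUf : u₀ ∈ UfE E := ⟨0, hu₀⟩
    have hne : (t.2.2 ∩ UfE E).Nonempty := ⟨u₀, hmem.2, hUf⟩
    rw [SatSC, if_pos hne] at hsc
    refine hsc u₀ ⟨⟨hmem.1, hmem.2⟩, hUf⟩ (fun v _ => ?_)
    rw [hu₀]
    cases E v with
    | fin j => exact Nat.zero_le j
    | inf j => trivial
  · rintro ⟨u, hu⟩
    refine ⟨fun v => if v = u then Rk.fin 0 else Rk.inf ⊤, ⟨⟨?_, ?_⟩, ?_⟩, u, by simp⟩
    · intro w i hw j hj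
      by_cases h : w = u <;> simp [h] at hw
      omega
    · intro w i hw j hj
      by_cases h : w = u <;> simp [h] at hw
    · intro t ht
      have hUf : UfE (fun v => if v = u then Rk.fin 0 else Rk.inf ⊤) = {u} := by
        ext w
        by_cases h : w = u <;> simp [UfE, h]
      have hUi : UiE (fun v => if v = u then Rk.fin 0 else Rk.inf ⊤) = ∅ := by
        ext w
        by_cases h : w = u <;> simp [UiE, h]
      rw [SatSC]
      split_ifs with hne
      · rintro w ⟨⟨hwA, hwC⟩, hwf⟩ _
        rw [hUf] at hwf
        subst hwf
        exact hu t ht ⟨hwA, hwC⟩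
      · rintro w ⟨_, hwi⟩ _
        rw [hUi] at hwi
        exact absurd hwi (Set.notMem_empty w)
end

section
/- Let E be an epistemic interpretation on W and let E^∞↓ be its counterfactual shifting, defined by E^∞↓(u) = (f, i) if E(u) = (∞, i) with i ∈ ℕ, and E^∞↓(u) = (∞, ∞) otherwise. Then E^∞↓ is an epistemic interpretation, and for all propositions A, B, C with C ∩ U^f_E = ∅: E satisfies the situated conditional A |~_C B if and only if E^∞↓ satisfies the situated conditional (A ∩ C) |~_⊤ B. -/
open scoped Classical

variable {W : Type*} [Fintype W] [Nonempty W]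

/-- The counterfactual shifting of `E`: `E^∞↓(u) = (f, i)` if `E(u) = (∞, i)`
with `i ∈ ℕ`, and `E^∞↓(u) = (∞, ∞)` otherwise. -/
noncomputable def shiftE (E : W → Rk) : W → Rk := fun u =>
  match E u with
  | Rk.inf i => if i = ⊤ then Rk.inf ⊤ else Rk.fin i.toNat
  | Rk.fin _ => Rk.inf ⊤


lemma shift_fin_iff (E : W → Rk) (u : W) (n : ℕ) :
    shiftE E u = Rk.fin n ↔ E u = Rk.inf (n : ℕ∞) := by
  unfold shiftE
  cases h : E u with
  | fin i => simp
  | inf i =>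
    cases i with
    | top => simp
    | coe k =>
      simp only [ENat.coe_ne_top, if_false, ENat.toNat_coe]
      constructor
      · rintro ⟨rfl⟩; rfl
      · intro h'; cases h'; rfl

lemma shift_not_inf (E : W → Rk) (u : W) (n : ℕ) :
    shiftE E u ≠ Rk.inf (n : ℕ∞) := by
  unfold shiftE
  cases E u with
  | fin i => simp
  | inf i =>
    cases i with
    | top => simp
    | coe k => simp

/-- the counterfactual shifting of an epistemic interpretation is
an epistemic interpretation, and whenever `C ∩ U^f_E = ∅`, `E` satisfies
`A |~_C B` iff `E^∞↓` satisfies `(A ∩ C) |~_⊤ B`. -/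
theorem counterfactual_shifting (E : W → Rk) (hE : EpiInterp E) :
    EpiInterp (shiftE E) ∧
    ∀ A B C : Set W, C ∩ UfE E = ∅ →
      (SatSC E A B C ↔ SatSC (shiftE E) (A ∩ C) B Set.univ) := by
  have hshift : EpiInterp (shiftE E) := by
    constructor
    · intro u i hu j hj
      obtain ⟨u', hu'⟩ := hE.2 u i ((shift_fin_iff E u i).mp hu) j hj
      exact ⟨u', (shift_fin_iff E u' j).mpr hu'⟩
    · intro u i hu
      exact absurd hu (shift_not_inf E u i)
  refine ⟨hshift, ?_⟩
  intro A B C hC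
  have hUf : ¬ (C ∩ UfE E).Nonempty := by rw [hC]; exact Set.not_nonempty_empty
  have hUfS : UfE (shiftE E) = UiE E := by
    ext u
    simp only [UfE, UiE, Set.mem_setOf_eq]
    exact exists_congr fun n => shift_fin_iff E u n
  unfold SatSC
  rw [if_neg hUf]
  by_cases hne : (Set.univ ∩ UfE (shiftE E)).Nonempty
  · rw [if_pos hne]
    constructor
    · intro h u hu hmin
      obtain ⟨⟨⟨huA, huC⟩, -⟩, huS⟩ := hu
      rw [hUfS] at huS
      refine h u ⟨⟨huA, huC⟩, huS⟩ ?_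
      intro v hv
      obtain ⟨⟨hvA, hvC⟩, hvS⟩ := hv
      have hvm := hmin v ⟨⟨⟨hvA, hvC⟩, trivial⟩, by rw [hUfS]; exact hvS⟩
      obtain ⟨i, hi⟩ := huS
      obtain ⟨j, hj⟩ := hvS
      rw [hi, hj]
      rw [(shift_fin_iff E u i).mpr hi, (shift_fin_iff E v j).mpr hj] at hvm
      simpa [Rk.le] using hvm
    · intro h u hu hmin
      obtain ⟨⟨huA, huC⟩, huS⟩ := hu
      refine h u ⟨⟨⟨huA, huC⟩, trivial⟩, by rw [hUfS]; exact huS⟩ ?_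
      intro v hv
      obtain ⟨⟨⟨hvA, hvC⟩, -⟩, hvS⟩ := hv
      rw [hUfS] at hvS
      have hvm := hmin v ⟨⟨hvA, hvC⟩, hvS⟩
      obtain ⟨i, hi⟩ := huS
      obtain ⟨j, hj⟩ := hvS
      rw [hi, hj] at hvm
      rw [(shift_fin_iff E u i).mpr hi, (shift_fin_iff E v j).mpr hj]
      simpa [Rk.le] using hvm
  · rw [if_neg hne]
    have hUi : UiE E = ∅ := by
      rw [← hUfS]
      by_contra h
      exact hne ⟨_, trivial, Set.nonempty_iff_ne_empty.mpr h |>.choose_spec⟩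
    have hUiS : UiE (shiftE E) = ∅ := by
      ext u
      simp only [UiE, Set.mem_setOf_eq, Set.mem_empty_iff_false, iff_false]
      rintro ⟨n, hn⟩
      exact shift_not_inf E u n hn
    constructor
    · intro _ u hu _
      rw [hUiS] at hu
      exact absurd hu.2 (Set.notMem_empty u)
    · intro _ u hu _
      rw [hUi] at hu
      exact absurd hu.2 (Set.notMem_empty u)
end

section
/- Let KB be a consistent SCKB and let E_KB be the epistemic interpretation constructed from the minimum ranked model R of KB^∧ and the minimum ranked model R' of KB^∧_{∞↓} (namely E_KB(u) = (f, R(u)) if R(u) ∈ ℕ, and E_KB(u) = (∞, R'(u)) if R(u) = ∞). Then E_KB is an epistemic interpretation and an epistemic model of KB, i.e., E_KB satisfies every situated conditional (A, B, C) ∈ KB. -/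
open scoped Classical

variable {W : Type*} [Fintype W] [Nonempty W]

/-- The conditionals of `KB` whose situation has infinite rank in `R`, in
conjunctive form, together with the conditional `U^f_R |~ ⊥`:
`KB^∧_{∞↓} = {(A ∩ C, B) : (A,B,C) ∈ KB, C ∩ U^f_R = ∅} ∪ {(U^f_R, ∅)}`. -/
def infForm (KB : Set (Set W × Set W × Set W)) (R : W → ℕ∞) :
    Set (Set W × Set W) :=
  {p | ∃ A B C : Set W, (A, B, C) ∈ KB ∧ C ∩ UfR R = ∅ ∧ p = (A ∩ C, B)} ∪
    {(UfR R, ∅)}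

/-- The minimal epistemic model of `KB` built from the minimum ranked model `R`
of `KB^∧` and the minimum ranked model `R'` of `KB^∧_{∞↓}`:
`E_KB(u) = (f, R(u))` if `R(u) ∈ ℕ`, and `E_KB(u) = (∞, R'(u))` if `R(u) = ∞`. -/
noncomputable def minEpi (R R' : W → ℕ∞) : W → Rk := fun u =>
  if R u = ⊤ then Rk.inf (R' u) else Rk.fin (R u).toNat

lemma toNat_le_iff' {a b : ℕ∞} (ha : a ≠ ⊤) (hb : b ≠ ⊤) : a.toNat ≤ b.toNat ↔ a ≤ b := by
  lift a to ℕ using ha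
  lift b to ℕ using hb
  simp

/-- for a consistent SCKB `KB`, the constructed interpretation
`E_KB` is an epistemic interpretation and an epistemic model of `KB`. -/
theorem constructed_minimal_interpretation_is_model
    (KB : Set (Set W × Set W × Set W)) (hfin : KB.Finite)
    (hcons : ∃ E : W → Rk, EpiModel E KB ∧ {u : W | E u = Rk.fin 0}.Nonempty)
    (R : W → ℕ∞) (hR : MinRankedModel R (conjForm KB))
    (R' : W → ℕ∞) (hR' : MinRankedModel R' (infForm KB R)) :
    EpiInterp (minEpi R R') ∧
      ∀ t ∈ KB, SatSC (minEpi R R') t.1 t.2.1 t.2.2 := by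
  obtain ⟨⟨hRint, hRsat⟩, -⟩ := hR
  obtain ⟨⟨hR'int, hR'sat⟩, -⟩ := hR'
  have hbot : SatDC R' (UfR R) (∅ : Set W) := hR'sat (UfR R, ∅) (Or.inr rfl)
  have key : ∀ u : W, R u ≠ ⊤ → R' u = ⊤ := by
    intro u hu
    by_contra h'
    obtain ⟨m, hm, hmin⟩ := Set.exists_min_image (UfR R ∩ UfR R') R' (Set.toFinite _)
      ⟨u, hu, h'⟩
    exact hbot m hm hmin
  have hUfE : UfE (minEpi R R') = UfR R := by
    ext u
    constructor
    · rintro ⟨i, hi⟩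
      intro htop
      simp [minEpi, htop] at hi
    · intro hu
      have hu' : R u ≠ ⊤ := hu
      exact ⟨(R u).toNat, by simp [minEpi, hu']⟩
  refine ⟨⟨?_, ?_⟩, ?_⟩
  · intro u i hu j hj
    by_cases htop : R u = ⊤
    · simp [minEpi, htop] at hu
    · simp only [minEpi, if_neg htop] at hu
      injection hu with hu
      have hRu : R u = (i : ℕ∞) := by rw [← hu, ENat.coe_toNat htop]
      obtain ⟨u', hu'⟩ := hRint u i hRu j hj
      exact ⟨u', by simp [minEpi, hu']⟩
  · intro u i hu j hj
    by_cases htop : R u = ⊤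
    · simp only [minEpi, if_pos htop] at hu
      injection hu with hu
      obtain ⟨u', hu'⟩ := hR'int u i hu j hj
      have htop' : R u' = ⊤ := by
        by_contra h
        rw [key u' h] at hu'
        exact (ENat.coe_ne_top j) hu'.symm
      exact ⟨u', by simp [minEpi, htop', hu']⟩
    · simp [minEpi, htop] at hu
  · rintro ⟨A, B, C⟩ ht
    simp only [SatSC]
    split
    · -- C ∩ UfE nonempty : plausible case
      rintro u ⟨⟨huA, huC⟩, huE⟩ hmin
      have hufm : u ∈ UfR R := hUfE ▸ huE
      have huf : R u ≠ ⊤ := hufm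
      have hsat : SatDC R (A ∩ C) B := hRsat (A ∩ C, B) ⟨A, B, C, ht, rfl⟩
      refine hsat u ⟨⟨huA, huC⟩, huf⟩ ?_
      rintro v ⟨⟨hvA, hvC⟩, hvfm⟩
      have hvf : R v ≠ ⊤ := hvfm
      have hvE : v ∈ UfE (minEpi R R') := hUfE.symm ▸ hvfm
      have := hmin v ⟨⟨hvA, hvC⟩, hvE⟩
      simp only [minEpi, if_neg huf, if_neg hvf, Rk.le] at this
      exact (toNat_le_iff' huf hvf).mp this
    · -- C ∩ UfE empty : implausible case
      rename_i hne
      have hCf : C ∩ UfR R = ∅ := by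
        rw [← hUfE]
        exact Set.not_nonempty_iff_eq_empty.mp hne
      rintro u ⟨⟨huA, huC⟩, huE⟩ hmin
      have hCtop : ∀ w : W, w ∈ C → R w = ⊤ := by
        intro w hw
        by_contra h
        exact absurd (Set.eq_empty_iff_forall_notMem.mp hCf w ⟨hw, h⟩) (by simp)
      have hutop : R u = ⊤ := hCtop u huC
      obtain ⟨i, hi⟩ := huE
      simp only [minEpi, if_pos hutop] at hi
      injection hi with hi
      have hu'f : R' u ≠ ⊤ := by rw [hi]; exact ENat.coe_ne_top i
      have hsat : SatDC R' (A ∩ C) B :=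
        hR'sat (A ∩ C, B) (Or.inl ⟨A, B, C, ht, hCf, rfl⟩)
      refine hsat u ⟨⟨huA, huC⟩, hu'f⟩ ?_
      rintro v ⟨⟨hvA, hvC⟩, hvf⟩
      have hvtop : R v = ⊤ := hCtop v hvC
      have hvE : v ∈ UiE (minEpi R R') := by
        refine ⟨(R' v).toNat, ?_⟩
        simp [minEpi, hvtop, ENat.coe_toNat hvf]
      have := hmin v ⟨⟨hvA, hvC⟩, hvE⟩
      simpa only [minEpi, if_pos hutop, if_pos hvtop, Rk.le] using this
end

section
/- Let KB be a consistent SCKB and let R be the minimum ranked model of KB^∧. Then the set U^f_R of finitely-ranked worlds equals the intersection ⋂ { W \ (A ∩ C) : (A, B, C) ∈ KB with (A ∩ C) ∩ U^f_R = ∅ } (with the convention that the intersection over the empty family is W). Equivalently, the formula μ (the conjunction of the negated antecedents of the conditionals of KB^∧ whose antecedent has infinite rank in R) is logically equivalent to the formula characterising U^f_R. -/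
open scoped Classical

variable {W : Type*} [Fintype W] [Nonempty W]

/-- for a consistent SCKB `KB` with `R` the minimum ranked model
of `KB^∧`, the set of finitely-ranked worlds `U^f_R` equals the intersection of
the complements of the antecedents `A ∩ C` of the conditionals of `KB` whose
antecedent has infinite rank in `R` (the empty intersection being `W`). -/
theorem mu_equivalent_to_finite_worlds
    (KB : Set (Set W × Set W × Set W)) (hfin : KB.Finite)
    (hcons : ∃ E : W → Rk, EpiModel E KB ∧ {u : W | E u = Rk.fin 0}.Nonempty)
    (R : W → ℕ∞) (hR : MinRankedModel R (conjForm KB)) :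
    UfR R = ⋂₀ {S : Set W | ∃ A B C : Set W,
      (A, B, C) ∈ KB ∧ (A ∩ C) ∩ UfR R = ∅ ∧ S = (A ∩ C)ᶜ} := by
  classical
  obtain ⟨E, hE, u₀, hu₀⟩ := hcons
  have hu₀ : E u₀ = Rk.fin 0 := hu₀
  set RE : W → ℕ∞ := fun v => match E v with | .fin i => (i : ℕ∞) | .inf _ => ⊤ with hREdef
  have hREfin : ∀ v (i : ℕ), RE v = (i : ℕ∞) ↔ E v = Rk.fin i := by
    intro v i
    cases hv : E v with
    | fin k => simp [hREdef, hv, Nat.cast_inj]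
    | inf k => simp [hREdef, hv]
  have hREtop : ∀ v, RE v ≠ ⊤ ↔ v ∈ UfE E := by
    intro v
    cases hv : E v with
    | fin k =>
        simp only [hREdef, hv, UfE, Set.mem_setOf_eq]
        exact ⟨fun _ => ⟨k, rfl⟩, fun _ => ENat.coe_ne_top k⟩
    | inf k =>
        simp only [hREdef, hv, UfE, Set.mem_setOf_eq]
        constructor
        · intro h; exact absurd rfl h
        · rintro ⟨i, hi⟩; cases hi
  have hREmodel : RankedModel RE (conjForm KB) := by
    constructor
    · intro v i hv j hj
      obtain ⟨u', hu'⟩ := hE.1.1 v i ((hREfin v i).1 hv) j hj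
      exact ⟨u', (hREfin u' j).2 hu'⟩
    · rintro ⟨P, B⟩ ⟨A, B2, C, hABC, hp⟩
      simp only [Prod.mk.injEq] at hp
      obtain ⟨rfl, rfl⟩ := hp
      intro w hw hmin
      have hsc := hE.2 _ hABC
      have hwUf : w ∈ UfE E := (hREtop w).1 hw.2
      have hCne : (C ∩ UfE E).Nonempty := ⟨w, hw.1.2, hwUf⟩
      rw [SatSC, if_pos hCne] at hsc
      apply hsc w ⟨hw.1, hwUf⟩
      intro v hv
      have hvUf : v ∈ UfR RE := (hREtop v).2 hv.2
      have hle := hmin v ⟨hv.1, hvUf⟩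
      obtain ⟨iw, hiw⟩ := hwUf
      obtain ⟨iv, hiv⟩ := hv.2
      rw [hiw, hiv]
      rw [(hREfin _ _).2 hiw, (hREfin _ _).2 hiv] at hle
      show iw ≤ iv
      exact_mod_cast hle
  have hRu₀ : R u₀ ≠ ⊤ := by
    have h := hR.2 RE hREmodel u₀
    rw [(hREfin u₀ 0).2 hu₀] at h
    intro htop
    rw [htop] at h
    simp at h
  -- max finite rank
  obtain ⟨v₀, hv₀fin, hv₀max⟩ : ∃ v₀, R v₀ ≠ ⊤ ∧ ∀ v, R v ≠ ⊤ → (R v).toNat ≤ (R v₀).toNat := by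
    have hne : (Finset.univ.filter (fun v => R v ≠ ⊤)).Nonempty := ⟨u₀, by simp [hRu₀]⟩
    obtain ⟨v₀, hv₀, hmax⟩ := Finset.exists_max_image _ (fun v => (R v).toNat) hne
    exact ⟨v₀, (Finset.mem_filter.mp hv₀).2, fun v hv => hmax v (by simp [hv])⟩
  set m := (R v₀).toNat with hm
  have hv₀m : R v₀ = (m : ℕ∞) := (ENat.coe_toNat hv₀fin).symm
  have hocc : ∀ j : ℕ, j ≤ m → ∃ w, R w = (j : ℕ∞) := by
    intro j hj
    rcases eq_or_lt_of_le hj with h | h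
    · exact ⟨v₀, by rw [hv₀m, h]⟩
    · exact hR.1.1 v₀ m hv₀m j h
  ext u
  constructor
  · intro hu
    rw [Set.mem_sInter]
    rintro S ⟨A, B, C, hABC, hempty, rfl⟩
    intro hmem
    have : u ∈ (A ∩ C) ∩ UfR R := ⟨hmem, hu⟩
    rw [hempty] at this
    exact this
  · intro hu
    rw [Set.mem_sInter] at hu
    by_contra htop
    have hRu : R u = ⊤ := not_not.mp htop
    set R' : W → ℕ∞ := fun v => if v = u then ((m + 1 : ℕ) : ℕ∞) else R v with hR'def
    have hR'u : R' u = ((m + 1 : ℕ) : ℕ∞) := by simp [hR'def]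
    have hR'ne : ∀ v, v ≠ u → R' v = R v := fun v hv => by simp [hR'def, hv]
    have hne_u : ∀ v, R v ≠ ⊤ → v ≠ u := fun v hv h => hv (by rw [h, hRu])
    have hRI' : RankedInterp R' := by
      intro v i hv j hj
      by_cases hvu : v = u
      · rw [hvu, hR'u] at hv
        have hi : (m + 1 : ℕ) = i := by exact_mod_cast hv
        obtain ⟨w, hw⟩ := hocc j (by omega)
        have hwne : w ≠ u := hne_u w (by rw [hw]; exact ENat.coe_ne_top j)
        exact ⟨w, by rw [hR'ne w hwne, hw]⟩
      · rw [hR'ne v hvu] at hv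
        obtain ⟨w, hw⟩ := hR.1.1 v i hv j hj
        have hwne : w ≠ u := hne_u w (by rw [hw]; exact ENat.coe_ne_top j)
        exact ⟨w, by rw [hR'ne w hwne, hw]⟩
    have hSat' : ∀ p ∈ conjForm KB, SatDC R' p.1 p.2 := by
      rintro ⟨P, B⟩ ⟨A, B2, C, hABC, hp⟩
      simp only [Prod.mk.injEq] at hp
      obtain ⟨rfl, rfl⟩ := hp
      by_cases hem : (A ∩ C) ∩ UfR R = ∅
      · have huAC : u ∉ A ∩ C := hu ((A ∩ C)ᶜ) ⟨A, B, C, hABC, hem, rfl⟩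
        intro w hw hmin
        exfalso
        have hwu : w ≠ u := fun h => huAC (h ▸ hw.1)
        have hmem : w ∈ (A ∩ C) ∩ UfR R :=
          ⟨hw.1, show R w ≠ ⊤ by rw [← hR'ne w hwu]; exact hw.2⟩
        rw [hem] at hmem
        exact hmem
      · obtain ⟨v₁, hv₁⟩ := Set.nonempty_iff_ne_empty.mpr hem
        have hv₁ne : v₁ ≠ u := hne_u v₁ hv₁.2
        have hv₁' : v₁ ∈ UfR R' := show R' v₁ ≠ ⊤ by rw [hR'ne v₁ hv₁ne]; exact hv₁.2
        intro w hw hmin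
        have hwu : w ≠ u := by
          intro h
          subst h
          have hle := hmin v₁ ⟨hv₁.1, hv₁'⟩
          rw [hR'u, hR'ne v₁ hv₁ne] at hle
          have hle2 : ((m + 1 : ℕ) : ℕ∞) ≤ (m : ℕ∞) := le_trans hle (by
            have := hv₀max v₁ hv₁.2
            rw [← ENat.coe_toNat hv₁.2]
            exact_mod_cast this)
          have : m + 1 ≤ m := by exact_mod_cast hle2
          omega
        have hwR : R' w = R w := hR'ne w hwu
        have hwmem : w ∈ (A ∩ C) ∩ UfR R :=
          ⟨hw.1, show R w ≠ ⊤ by rw [← hwR]; exact hw.2⟩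
        apply hR.1.2 (A ∩ C, B) ⟨A, B, C, hABC, rfl⟩ w hwmem
        intro v hv
        have hvne : v ≠ u := hne_u v hv.2
        have hv' : v ∈ (A ∩ C) ∩ UfR R' :=
          ⟨hv.1, show R' v ≠ ⊤ by rw [hR'ne v hvne]; exact hv.2⟩
        have h := hmin v hv'
        rwa [hwR, hR'ne v hvne] at h
    have h := hR.2 R' ⟨hRI', hSat'⟩ u
    rw [hRu, hR'u] at h
    exact ENat.coe_ne_top (m + 1) (top_le_iff.mp h)
end

section
/- Let KB be a consistent SCKB, R the minimum ranked model of KB^∧, and E_KB the minimal epistemic model of KB constructed from R and the minimum ranked model R' of KB^∧_{∞↓}. For all propositions A, B, C with C ∩ U^f_R ≠ ∅: E_KB satisfies the situated conditional A |~_C B if and only if R satisfies the defeasible conditional (A ∩ C) |~ B. -/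
open scoped Classical

variable {W : Type*} [Fintype W] [Nonempty W]

/-- for a consistent SCKB `KB` and a situation `C` compatible
with the finitely-ranked worlds of the minimum ranked model `R` of `KB^∧`,
the minimal epistemic model `E_KB` satisfies the situated conditional
`A |~_C B` iff `R` satisfies the defeasible conditional `(A ∩ C) |~ B`. -/
theorem minimal_closure_finite_situation
    (KB : Set (Set W × Set W × Set W)) (hfin : KB.Finite)
    (hcons : ∃ E : W → Rk, EpiModel E KB ∧ {u : W | E u = Rk.fin 0}.Nonempty)
    (R : W → ℕ∞) (hR : MinRankedModel R (conjForm KB))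
    (R' : W → ℕ∞) (hR' : MinRankedModel R' (infForm KB R)) :
    ∀ A B C : Set W, (C ∩ UfR R).Nonempty →
      (SatSC (minEpi R R') A B C ↔ SatDC R (A ∩ C) B) := by
  intro A B C hC
  have hUfE : UfE (minEpi R R') = UfR R := by
    ext u
    simp only [UfE, UfR, minEpi, Set.mem_setOf_eq]
    constructor
    · rintro ⟨i, hi⟩ htop
      rw [if_pos htop] at hi
      exact Rk.noConfusion hi
    · intro htop
      exact ⟨(R u).toNat, if_neg htop⟩
  have hle : ∀ u v : W, R u ≠ ⊤ → R v ≠ ⊤ →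
      ((minEpi R R' u).le (minEpi R R' v) ↔ R u ≤ R v) := by
    intro u v hu hv
    simp only [minEpi, if_neg hu, if_neg hv, Rk.le]
    rw [← ENat.coe_toNat hu, ← ENat.coe_toNat hv, Nat.cast_le]
    simp
  have hCne : (C ∩ UfE (minEpi R R')).Nonempty := by rw [hUfE]; exact hC
  rw [SatSC, if_pos hCne]
  have hset : A ∩ C ∩ UfE (minEpi R R') = (A ∩ C) ∩ UfR R := by rw [hUfE]
  rw [hset]
  unfold SatDC
  constructor
  · intro h u hu hmin
    refine h u hu ?_
    intro v hv
    exact (hle u v hu.2 hv.2).2 (hmin v hv)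
  · intro h u hu hmin
    refine h u hu ?_
    intro v hv
    exact (hle u v hu.2 hv.2).1 (hmin v hv)
end

section
/- Let KB be a consistent SCKB, R the minimum ranked model of KB^∧, R' the minimum ranked model of KB^∧_{∞↓}, and E_KB the minimal epistemic model of KB constructed from R and R'. For all propositions A, B, C with C ∩ U^f_R = ∅: E_KB satisfies the situated conditional A |~_C B if and only if R' satisfies the defeasible conditional (A ∩ C) |~ B. -/
open scoped Classical

variable {W : Type*} [Fintype W] [Nonempty W]

/-- for a consistent SCKB `KB` and a situation `C` incompatible
with the finitely-ranked worlds of the minimum ranked model `R` of `KB^∧`,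
the minimal epistemic model `E_KB` satisfies the situated conditional
`A |~_C B` iff the minimum ranked model `R'` of `KB^∧_{∞↓}` satisfies the
defeasible conditional `(A ∩ C) |~ B`. -/
theorem minimal_closure_infinite_situation
    (KB : Set (Set W × Set W × Set W)) (hfin : KB.Finite)
    (hcons : ∃ E : W → Rk, EpiModel E KB ∧ {u : W | E u = Rk.fin 0}.Nonempty)
    (R : W → ℕ∞) (hR : MinRankedModel R (conjForm KB))
    (R' : W → ℕ∞) (hR' : MinRankedModel R' (infForm KB R)) :
    ∀ A B C : Set W, C ∩ UfR R = ∅ →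
      (SatSC (minEpi R R') A B C ↔ SatDC R' (A ∩ C) B) := by
  intro A B C hC
  have hCtop : ∀ u, u ∈ C → R u = ⊤ := by
    intro u hu
    by_contra h
    have : u ∈ C ∩ UfR R := ⟨hu, h⟩
    simp [hC] at this
  have hE : ∀ u, u ∈ C → minEpi R R' u = Rk.inf (R' u) := by
    intro u hu; simp [minEpi, hCtop u hu]
  have hempty : ¬ (C ∩ UfE (minEpi R R')).Nonempty := by
    rintro ⟨u, hu, i, hi⟩
    rw [hE u hu] at hi; cases hi
  have hmem : ∀ u, u ∈ C → (u ∈ UiE (minEpi R R') ↔ u ∈ UfR R') := by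
    intro u hu
    constructor
    · rintro ⟨i, hi⟩
      rw [hE u hu] at hi
      injection hi with h
      simp [UfR, h]
    · intro h
      obtain ⟨n, hn⟩ := WithTop.ne_top_iff_exists.mp h
      exact ⟨n, by rw [hE u hu, ← hn]; rfl⟩
  rw [SatSC, if_neg hempty]
  constructor
  · intro h u hu hmin
    obtain ⟨⟨huA, huC⟩, huf⟩ := hu
    apply h u ⟨⟨huA, huC⟩, (hmem u huC).mpr huf⟩
    rintro v ⟨⟨hvA, hvC⟩, hvi⟩
    have := hmin v ⟨⟨hvA, hvC⟩, (hmem v hvC).mp hvi⟩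
    rw [hE u huC, hE v hvC]
    exact this
  · intro h u hu hmin
    obtain ⟨⟨huA, huC⟩, hui⟩ := hu
    apply h u ⟨⟨huA, huC⟩, (hmem u huC).mp hui⟩
    rintro v ⟨⟨hvA, hvC⟩, hvf⟩
    have := hmin v ⟨⟨hvA, hvC⟩, (hmem v hvC).mpr hvf⟩
    rw [hE u huC, hE v hvC] at this
    exact this
end
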